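/- Let M be a weight sequence. Then M satisfies (M.2) (i.e., M_{p+q} ≤ C H^{p+q} M_p M_q for some C, H > 0 and all p, q) if and only if the weight system V_M = {exp(ω_M(·/λ)) : λ > 0} satisfies condition [⊗]: for every ν there exist λ, μ ≥ ν and C > 0 with exp(ω_M(x/λ))·exp(ω_M(x/μ)) ≤ C·exp(ω_M(x/ν)) for all x ∈ ℝ^d; equivalently 2ω_M(t) ≤ ω_M(Ht) + log C for some H, C > 0 and all t ≥ 0. -/
import Mathlib


open Real Set Filter

/-- A weight sequence: positive, log-convex, with `M_p^{1/p} → ∞`. -/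
def IsWeightSeq (M : ℕ → ℝ) : Prop :=
  (∀ p, 0 < M p) ∧
  (∀ p : ℕ, 1 ≤ p → (M p) ^ 2 ≤ M (p - 1) * M (p + 1)) ∧
  Filter.Tendsto (fun p : ℕ => (M p) ^ ((1 : ℝ) / p)) Filter.atTop Filter.atTop

/-- The associated function `ω_M(t) = sup_p log (t^p M₀ / M_p)`. -/
noncomputable def assocFun (M : ℕ → ℝ) (t : ℝ) : ℝ :=
  ⨆ p : ℕ, Real.log (t ^ p * M 0 / M p)

/-- The quotient sequence `m_p = M_{p+1}/M_p`. -/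
noncomputable def mseq (M : ℕ → ℝ) (p : ℕ) : ℝ := M (p + 1) / M p

/-- The counting function `m(x) = #{p ≥ 1 : m_p ≤ x}` of the sequence `(m_p)`. -/
noncomputable def cntFun (M : ℕ → ℝ) (x : ℝ) : ℝ :=
  (Nat.card {p : ℕ // 1 ≤ p ∧ mseq M p ≤ x} : ℝ)

noncomputable def fterm (M : ℕ → ℝ) (t : ℝ) (p : ℕ) : ℝ := t ^ p * M 0 / M p

section helpers
variable {M : ℕ → ℝ} (hpos : ∀ p, 0 < M p)

lemma assocFun_def (t : ℝ) : assocFun M t = ⨆ p : ℕ, Real.log (fterm M t p) := rfl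

include hpos

lemma fterm_pos {t : ℝ} (ht : 0 < t) (p : ℕ) : 0 < fterm M t p := by
  have := hpos p; have := hpos 0; unfold fterm; positivity

lemma fterm_zero : fterm M t 0 = 1 := by
  unfold fterm; rw [pow_zero, one_mul, div_self (hpos 0).ne']

lemma fterm_succ (t : ℝ) (j : ℕ) :
    fterm M t (j + 1) = fterm M t j * (t / mseq M j) := by
  have h0 := (hpos j).ne'
  have h1 := (hpos (j+1)).ne'
  unfold fterm mseq
  field_simp
  ring

lemma mseq_pos (p : ℕ) : 0 < mseq M p := div_pos (hpos (p+1)) (hpos p)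

lemma mseq_mono (hlc : ∀ p : ℕ, 1 ≤ p → (M p) ^ 2 ≤ M (p - 1) * M (p + 1)) :
    Monotone (mseq M) := by
  apply monotone_nat_of_le_succ
  intro p
  have h := hlc (p + 1) (Nat.le_add_left 1 p)
  simp only [Nat.add_sub_cancel] at h
  unfold mseq
  rw [div_le_div_iff₀ (hpos p) (hpos (p+1))]
  nlinarith [hpos p, hpos (p+1), hpos (p+2)]

end helpers

section helpers2
variable {M : ℕ → ℝ} (hpos : ∀ p, 0 < M p)

include hpos

lemma mseq_unbounded
    (htend : Filter.Tendsto (fun p : ℕ => (M p) ^ ((1 : ℝ) / p)) Filter.atTop Filter.atTop)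
    (t : ℝ) : ∃ N, t ≤ mseq M N := by
  by_contra hcon
  push_neg at hcon
  have ht0 : 0 < t := lt_trans (mseq_pos hpos 0) (hcon 0)
  -- M p ≤ M 0 * t ^ p
  have hbound : ∀ p, M p ≤ M 0 * t ^ p := by
    intro p
    induction p with
    | zero => simp
    | succ n ih =>
      have h1 : M (n + 1) = M n * mseq M n := by
        rw [mseq, ← mul_div_assoc, mul_div_cancel_left₀ _ (hpos n).ne']
      rw [h1, pow_succ, ← mul_assoc]
      have := (hcon n).le
      nlinarith [hpos n, mseq_pos hpos n, mul_le_mul ih this (mseq_pos hpos n).le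
        (mul_nonneg (hpos 0).le (pow_nonneg ht0.le n))]
  set K : ℝ := max (M 0) 1 * t with hK
  have hK1 : 0 < K := mul_pos (lt_of_lt_of_le one_pos (le_max_right _ _)) ht0
  have hub : ∀ p : ℕ, 1 ≤ p → (M p) ^ ((1:ℝ)/p) ≤ K := by
    intro p hp
    have hp0 : (p:ℝ) ≠ 0 := Nat.cast_ne_zero.mpr (by omega)
    have hinv : (0:ℝ) ≤ 1/(p:ℝ) := by positivity
    have h1 : (M p) ^ ((1:ℝ)/p) ≤ (M 0 * t ^ p) ^ ((1:ℝ)/p) :=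
      Real.rpow_le_rpow (hpos p).le (hbound p) hinv
    have h2 : (M 0 * t ^ p) ^ ((1:ℝ)/p) = (M 0) ^ ((1:ℝ)/p) * t := by
      rw [Real.mul_rpow (hpos 0).le (by positivity), ← Real.rpow_natCast t p,
        ← Real.rpow_mul ht0.le]
      rw [mul_one_div, div_self hp0, Real.rpow_one]
    have h3 : (M 0) ^ ((1:ℝ)/p) ≤ max (M 0) 1 := by
      rcases le_total (M 0) 1 with h | h
      · calc (M 0) ^ ((1:ℝ)/p) ≤ 1 := Real.rpow_le_one (hpos 0).le h hinv
          _ ≤ max (M 0) 1 := le_max_right _ _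
      · have hle : (1:ℝ)/p ≤ 1 := by
          rw [div_le_one (by positivity)]
          exact_mod_cast hp
        have h4 := Real.rpow_le_rpow_of_exponent_le h hle
        rw [Real.rpow_one] at h4
        exact h4.trans (le_max_left _ _)
    calc (M p) ^ ((1:ℝ)/p) ≤ (M 0) ^ ((1:ℝ)/p) * t := h1.trans_eq h2
      _ ≤ K := by rw [hK]; exact mul_le_mul_of_nonneg_right h3 ht0.le
  obtain ⟨N, hN⟩ := Filter.eventually_atTop.mp (htend.eventually_gt_atTop K)
  exact absurd (hub (max N 1) (le_max_right N 1)) (not_le.mpr (hN _ (le_max_left N 1)))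

end helpers2

section helpers3
variable {M : ℕ → ℝ} (hpos : ∀ p, 0 < M p)

include hpos

/-- If `t ≤ m_j` for all `j ≥ N`, then `fterm` is ≤ its value at `N` beyond `N`. -/
lemma fterm_le_of_ge {t : ℝ} (ht : 0 < t) {N : ℕ} (h : ∀ j, N ≤ j → t ≤ mseq M j) :
    ∀ k, fterm M t (N + k) ≤ fterm M t N := by
  intro k
  induction k with
  | zero => exact le_refl _
  | succ n ih =>
    have h1 : fterm M t (N + n + 1) = fterm M t (N + n) * (t / mseq M (N + n)) :=
      fterm_succ hpos t (N + n)
    have h2 : t / mseq M (N + n) ≤ 1 :=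
      (div_le_one (mseq_pos hpos (N + n))).mpr (h (N + n) (Nat.le_add_right N n))
    have h3 : 0 < fterm M t (N + n) := fterm_pos hpos ht (N + n)
    calc fterm M t (N + n + 1) ≤ fterm M t (N + n) * 1 := by
          rw [h1]; exact mul_le_mul_of_nonneg_left h2 h3.le
      _ = fterm M t (N + n) := mul_one _
      _ ≤ fterm M t N := ih

/-- If `m_j ≤ t` for all `j < r`, then `fterm` is monotone up to `r`. -/
lemma fterm_le_of_le {t : ℝ} (ht : 0 < t) {r : ℕ} (h : ∀ j, j < r → mseq M j ≤ t) :
    ∀ q, q ≤ r → fterm M t q ≤ fterm M t r := by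
  intro q hq
  induction r with
  | zero => interval_cases q; exact le_refl _
  | succ n ih =>
    rcases Nat.lt_or_ge q (n+1) with h' | h'
    · have hq' : q ≤ n := by omega
      have step : fterm M t n ≤ fterm M t (n + 1) := by
        rw [fterm_succ hpos t n]
        have h2 : 1 ≤ t / mseq M n :=
          (one_le_div (mseq_pos hpos n)).mpr (h n (Nat.lt_succ_self n))
        nlinarith [fterm_pos hpos ht n]
      exact (ih (fun j hj => h j (by omega)) hq').trans step
    · have : q = n + 1 := by omega
      rw [this]

/-- At `t = m_r`, the supremum defining `ω` is attained at `r`. -/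
lemma fterm_peak (hlc : Monotone (mseq M)) (r : ℕ) (q : ℕ) :
    fterm M (mseq M r) q ≤ fterm M (mseq M r) r := by
  set t := mseq M r with htdef
  have ht : 0 < t := mseq_pos hpos r
  rcases Nat.lt_or_ge q r with h | h
  · exact fterm_le_of_le hpos ht (fun j hj => hlc (by omega : j ≤ r)) q h.le
  · obtain ⟨k, rfl⟩ := Nat.exists_eq_add_of_le h
    exact fterm_le_of_ge hpos ht (fun j hj => hlc hj) k

/-- For `t > 0` the family defining `ω(t)` is bounded above. -/
lemma log_fterm_bddAbove (hlc : Monotone (mseq M))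
    (hunb : ∀ s : ℝ, ∃ N, s ≤ mseq M N) {t : ℝ} (ht : 0 < t) :
    BddAbove (Set.range fun p : ℕ => Real.log (fterm M t p)) := by
  obtain ⟨N, hN⟩ := hunb t
  have key : ∀ q, fterm M t q ≤ ((Finset.range (N + 1)).image (fterm M t)).max'
      (by simp) := by
    intro q
    rcases Nat.lt_or_ge q (N + 1) with h | h
    · exact Finset.le_max' _ _ (Finset.mem_image_of_mem _ (Finset.mem_range.mpr h))
    · obtain ⟨k, rfl⟩ := Nat.exists_eq_add_of_le (show N ≤ q by omega)
      have h1 : fterm M t (N + k) ≤ fterm M t N :=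
        fterm_le_of_ge hpos ht (fun j hj => hN.trans (hlc hj)) k
      exact h1.trans (Finset.le_max' _ _
        (Finset.mem_image_of_mem _ (Finset.mem_range.mpr (by omega))))
  refine ⟨Real.log (((Finset.range (N + 1)).image (fterm M t)).max' (by simp)), ?_⟩
  rintro y ⟨q, rfl⟩
  exact Real.log_le_log (fterm_pos hpos ht q) (key q)

lemma le_assocFun (hlc : Monotone (mseq M)) (hunb : ∀ s : ℝ, ∃ N, s ≤ mseq M N)
    {t : ℝ} (ht : 0 < t) (p : ℕ) : Real.log (fterm M t p) ≤ assocFun M t :=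
  le_ciSup (log_fterm_bddAbove hpos hlc hunb ht) p

lemma assocFun_zero : assocFun M 0 = 0 := by
  have : ∀ p : ℕ, Real.log ((0:ℝ) ^ p * M 0 / M p) = 0 := by
    intro p
    cases p with
    | zero => rw [pow_zero, one_mul, div_self (hpos 0).ne', Real.log_one]
    | succ n => rw [zero_pow (Nat.succ_ne_zero n), zero_mul, zero_div, Real.log_zero]
  unfold assocFun
  simp only [this, ciSup_const]

lemma assocFun_nonneg (hlc : Monotone (mseq M)) (hunb : ∀ s : ℝ, ∃ N, s ≤ mseq M N)
    {t : ℝ} (ht : 0 ≤ t) : 0 ≤ assocFun M t := by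
  rcases eq_or_lt_of_le ht with h | h
  · rw [← h, assocFun_zero hpos]
  · have := le_assocFun hpos hlc hunb h 0
    rwa [fterm_zero hpos, Real.log_one] at this

lemma assocFun_mono (hlc : Monotone (mseq M)) (hunb : ∀ s : ℝ, ∃ N, s ≤ mseq M N)
    {t₁ t₂ : ℝ} (h1 : 0 ≤ t₁) (h12 : t₁ ≤ t₂) : assocFun M t₁ ≤ assocFun M t₂ := by
  rcases eq_or_lt_of_le h1 with h | h
  · rw [← h, assocFun_zero hpos]
    exact assocFun_nonneg hpos hlc hunb (h ▸ h12)
  · rw [assocFun_def, assocFun_def]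
    apply ciSup_le
    intro p
    have hterm : Real.log (fterm M t₁ p) ≤ Real.log (fterm M t₂ p) := by
      apply Real.log_le_log (fterm_pos hpos h p)
      unfold fterm
      have h2 : t₁ ^ p ≤ t₂ ^ p := pow_le_pow_left₀ h.le h12 p
      exact div_le_div_of_nonneg_right (mul_le_mul_of_nonneg_right h2 (hpos 0).le) (hpos p).le
    exact hterm.trans (le_ciSup (log_fterm_bddAbove hpos hlc hunb (h.trans_le h12)) p)

lemma assocFun_le_peak (hlc : Monotone (mseq M)) (r : ℕ) :
    assocFun M (mseq M r) ≤ Real.log (fterm M (mseq M r) r) := by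
  rw [assocFun_def]
  apply ciSup_le
  intro q
  exact Real.log_le_log (fterm_pos hpos (mseq_pos hpos r) q) (fterm_peak hpos hlc r q)

end helpers3

section main
variable {M : ℕ → ℝ}

/-- (M.2) implies the scalar condition. -/
lemma P_to_S (hpos : ∀ p, 0 < M p) (hlc : Monotone (mseq M))
    (hunb : ∀ s : ℝ, ∃ N, s ≤ mseq M N)
    (h : ∃ C H : ℝ, 0 < C ∧ 0 < H ∧ ∀ p q : ℕ, M (p + q) ≤ C * H ^ (p + q) * M p * M q) :
    ∃ H C : ℝ, 0 < H ∧ 0 < C ∧ ∀ t ≥ (0:ℝ),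
      2 * assocFun M t ≤ assocFun M (H * t) + Real.log C := by
  obtain ⟨C, H, hC, hH, hPQ⟩ := h
  refine ⟨H, max (C * M 0) 1, hH, lt_of_lt_of_le one_pos (le_max_right _ _), ?_⟩
  intro t ht
  rcases eq_or_lt_of_le ht with h0 | h0
  · rw [← h0, mul_zero, assocFun_zero hpos]
    have : (0:ℝ) ≤ Real.log (max (C * M 0) 1) :=
      Real.log_nonneg (le_max_right _ _)
    linarith
  -- t > 0
  have hHt : 0 < H * t := mul_pos hH h0
  have key : ∀ p q : ℕ, Real.log (fterm M t p) + Real.log (fterm M t q) ≤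
      assocFun M (H * t) + Real.log (C * M 0) := by
    intro p q
    have hp := fterm_pos hpos h0 p
    have hq := fterm_pos hpos h0 q
    have hrr := fterm_pos hpos hHt (p + q)
    have hmul : fterm M t p * fterm M t q ≤ (C * M 0) * fterm M (H * t) (p + q) := by
      have e1 : fterm M t p * fterm M t q
          = t ^ p * t ^ q * (M 0 * M 0) / (M p * M q) := by unfold fterm; ring
      have e2 : (C * M 0) * fterm M (H * t) (p + q)
          = C * M 0 * ((H * t) ^ (p + q) * M 0) / M (p + q) := by unfold fterm; ring
      rw [e1, e2, div_le_div_iff₀ (mul_pos (hpos p) (hpos q)) (hpos (p + q))]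
      have expand : (H * t) ^ (p + q) = H ^ (p + q) * (t ^ p * t ^ q) := by
        rw [mul_pow, pow_add]; ring
      rw [expand]
      have hfac : (0:ℝ) ≤ t ^ p * t ^ q * (M 0 * M 0) :=
        mul_nonneg (mul_nonneg (pow_nonneg h0.le p) (pow_nonneg h0.le q)) (mul_pos (hpos 0) (hpos 0)).le
      nlinarith [mul_le_mul_of_nonneg_right (hPQ p q) hfac]
    calc Real.log (fterm M t p) + Real.log (fterm M t q)
        = Real.log (fterm M t p * fterm M t q) := (Real.log_mul hp.ne' hq.ne').symm
      _ ≤ Real.log ((C * M 0) * fterm M (H * t) (p + q)) :=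
          Real.log_le_log (mul_pos hp hq) hmul
      _ = Real.log (fterm M (H * t) (p + q)) + Real.log (C * M 0) := by
          rw [Real.log_mul (mul_pos hC (hpos 0)).ne' hrr.ne']; ring
      _ ≤ assocFun M (H * t) + Real.log (C * M 0) := by
          have := le_assocFun hpos hlc hunb hHt (p + q)
          linarith
  have step1 : ∀ p : ℕ, Real.log (fterm M t p) ≤
      assocFun M (H * t) + Real.log (C * M 0) - assocFun M t := by
    intro p
    have : assocFun M t ≤ assocFun M (H * t) + Real.log (C * M 0)
        - Real.log (fterm M t p) := by
      rw [assocFun_def]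
      apply ciSup_le
      intro q
      have := key p q
      linarith
    linarith
  have step2 : assocFun M t ≤ assocFun M (H * t) + Real.log (C * M 0) - assocFun M t := by
    rw [assocFun_def]
    exact ciSup_le step1
  have hlog : Real.log (C * M 0) ≤ Real.log (max (C * M 0) 1) :=
    Real.log_le_log (mul_pos hC (hpos 0)) (le_max_left _ _)
  linarith

/-- The scalar condition implies (M.2). -/
lemma S_to_P (hpos : ∀ p, 0 < M p) (hlc : Monotone (mseq M))
    (hunb : ∀ s : ℝ, ∃ N, s ≤ mseq M N)
    (h : ∃ H C : ℝ, 0 < H ∧ 0 < C ∧ ∀ t ≥ (0:ℝ),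
      2 * assocFun M t ≤ assocFun M (H * t) + Real.log C) :
    ∃ C H : ℝ, 0 < C ∧ 0 < H ∧ ∀ p q : ℕ, M (p + q) ≤ C * H ^ (p + q) * M p * M q := by
  obtain ⟨H, C, hH, hC, hS⟩ := h
  refine ⟨C / M 0, H, div_pos hC (hpos 0), hH, ?_⟩
  intro p q
  set r := p + q with hr
  set u := mseq M r with hu
  have hu0 : 0 < u := mseq_pos hpos r
  set s := u / H with hs
  have hs0 : 0 < s := div_pos hu0 hH
  have hHs : H * s = u := by rw [hs]; field_simp
  have h1 := hS s hs0.le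
  rw [hHs] at h1
  have h2 : assocFun M u ≤ Real.log (fterm M u r) := assocFun_le_peak hpos hlc r
  have h3 := le_assocFun hpos hlc hunb hs0 p
  have h4 := le_assocFun hpos hlc hunb hs0 q
  have hp := fterm_pos hpos hs0 p
  have hq := fterm_pos hpos hs0 q
  have hfr := fterm_pos hpos hu0 r
  have h5 : Real.log (fterm M s p * fterm M s q) ≤ Real.log (C * fterm M u r) := by
    rw [Real.log_mul hp.ne' hq.ne', Real.log_mul hC.ne' hfr.ne']
    linarith
  have h6 : fterm M s p * fterm M s q ≤ C * fterm M u r :=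
    (Real.log_le_log_iff (mul_pos hp hq) (mul_pos hC hfr)).mp h5
  -- unfold and cancel the powers of s
  have e1 : fterm M s p * fterm M s q
      = s ^ p * s ^ q * (M 0 * M 0) / (M p * M q) := by unfold fterm; ring
  have e2 : C * fterm M u r = C * (u ^ r * M 0) / M r := by unfold fterm; ring
  rw [e1, e2, div_le_div_iff₀ (mul_pos (hpos p) (hpos q)) (hpos r)] at h6
  have hur : u ^ r = H ^ r * (s ^ p * s ^ q) := by
    rw [← hHs, mul_pow, pow_add]; ring
  rw [hur] at h6
  have hfac : (0:ℝ) < s ^ p * s ^ q * M 0 :=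
    mul_pos (mul_pos (pow_pos hs0 p) (pow_pos hs0 q)) (hpos 0)
  rw [show C / M 0 * H ^ r * M p * M q
      = (C * H ^ r * M p * M q) / M 0 by ring, le_div_iff₀ (hpos 0)]
  have h7 : (M r * M 0) * (s ^ p * s ^ q * M 0)
      ≤ (C * H ^ r * M p * M q) * (s ^ p * s ^ q * M 0) := by linear_combination h6
  exact le_of_mul_le_mul_right h7 hfac

end main

section tensor
variable {M : ℕ → ℝ}

lemma S_to_T (d : ℕ) (hd : 0 < d) (hpos : ∀ p, 0 < M p) (hlc : Monotone (mseq M))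
    (hunb : ∀ s : ℝ, ∃ N, s ≤ mseq M N)
    (h : ∃ H C : ℝ, 0 < H ∧ 0 < C ∧ ∀ t ≥ (0:ℝ),
      2 * assocFun M t ≤ assocFun M (H * t) + Real.log C) :
    ∀ ν : ℝ, 0 < ν → ∃ lam μ : ℝ, ν ≤ lam ∧ ν ≤ μ ∧ ∃ C > (0:ℝ),
      ∀ x : EuclideanSpace ℝ (Fin d),
        Real.exp (assocFun M (‖x‖ / lam)) * Real.exp (assocFun M (‖x‖ / μ)) ≤
          C * Real.exp (assocFun M (‖x‖ / ν)) := by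
  obtain ⟨H, C, hH, hC, hS⟩ := h
  intro ν hν
  set H' : ℝ := max H 1 with hH'
  have hH'1 : (1:ℝ) ≤ H' := le_max_right _ _
  have hH'0 : (0:ℝ) < H' := lt_of_lt_of_le one_pos hH'1
  set C' : ℝ := max C 1 with hC'
  have hC'0 : (0:ℝ) < C' := lt_of_lt_of_le one_pos (le_max_right _ _)
  have hS' : ∀ t ≥ (0:ℝ), 2 * assocFun M t ≤ assocFun M (H' * t) + Real.log C' := by
    intro t ht
    have := hS t ht
    have h1 : assocFun M (H * t) ≤ assocFun M (H' * t) :=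
      assocFun_mono hpos hlc hunb (mul_nonneg hH.le ht)
        (mul_le_mul_of_nonneg_right (le_max_left _ _) ht)
    have h2 : Real.log C ≤ Real.log C' := Real.log_le_log hC (le_max_left _ _)
    linarith
  refine ⟨H' * ν, H' * ν, le_mul_of_one_le_left hν.le hH'1,
    le_mul_of_one_le_left hν.le hH'1, C', hC'0, ?_⟩
  intro x
  set s : ℝ := ‖x‖ / (H' * ν) with hsdef
  have hs0 : (0:ℝ) ≤ s := div_nonneg (norm_nonneg x) (mul_pos hH'0 hν).le
  have hkey : H' * s = ‖x‖ / ν := by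
    rw [hsdef]; field_simp
  calc Real.exp (assocFun M s) * Real.exp (assocFun M s)
      = Real.exp (2 * assocFun M s) := by rw [← Real.exp_add]; ring_nf
    _ ≤ Real.exp (assocFun M (H' * s) + Real.log C') := Real.exp_le_exp.mpr (hS' s hs0)
    _ = C' * Real.exp (assocFun M (‖x‖ / ν)) := by
        rw [hkey, Real.exp_add, Real.exp_log hC'0]; ring

lemma T_to_S (d : ℕ) (hd : 0 < d) (hpos : ∀ p, 0 < M p) (hlc : Monotone (mseq M))
    (hunb : ∀ s : ℝ, ∃ N, s ≤ mseq M N)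
    (h : ∀ ν : ℝ, 0 < ν → ∃ lam μ : ℝ, ν ≤ lam ∧ ν ≤ μ ∧ ∃ C > (0:ℝ),
      ∀ x : EuclideanSpace ℝ (Fin d),
        Real.exp (assocFun M (‖x‖ / lam)) * Real.exp (assocFun M (‖x‖ / μ)) ≤
          C * Real.exp (assocFun M (‖x‖ / ν))) :
    ∃ H C : ℝ, 0 < H ∧ 0 < C ∧ ∀ t ≥ (0:ℝ),
      2 * assocFun M t ≤ assocFun M (H * t) + Real.log C := by
  obtain ⟨lam, μ, hlam, hμ, C, hC, hx⟩ := h 1 one_pos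
  set κ : ℝ := max lam μ with hκ
  have hκ1 : (1:ℝ) ≤ κ := hlam.trans (le_max_left _ _)
  have hκ0 : (0:ℝ) < κ := lt_of_lt_of_le one_pos hκ1
  refine ⟨κ, C, hκ0, hC, ?_⟩
  intro t ht
  set x : EuclideanSpace ℝ (Fin d) :=
    (κ * t) • (EuclideanSpace.single (⟨0, hd⟩ : Fin d) (1:ℝ)) with hxdef
  have hnx : ‖x‖ = κ * t := by
    rw [hxdef, norm_smul, EuclideanSpace.norm_single, norm_one, mul_one,
      Real.norm_eq_abs, abs_of_nonneg (mul_nonneg hκ0.le ht)]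
  have key := hx x
  rw [hnx, div_one] at key
  have hlam0 : (0:ℝ) < lam := lt_of_lt_of_le one_pos hlam
  have hμ0 : (0:ℝ) < μ := lt_of_lt_of_le one_pos hμ
  have h1 : assocFun M t ≤ assocFun M (κ * t / lam) := by
    apply assocFun_mono hpos hlc hunb ht
    rw [le_div_iff₀ hlam0]
    nlinarith [le_max_left lam μ]
  have h2 : assocFun M t ≤ assocFun M (κ * t / μ) := by
    apply assocFun_mono hpos hlc hunb ht
    rw [le_div_iff₀ hμ0]
    nlinarith [le_max_right lam μ]
  have h3 : Real.exp (assocFun M t) * Real.exp (assocFun M t) ≤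
      C * Real.exp (assocFun M (κ * t)) := by
    calc Real.exp (assocFun M t) * Real.exp (assocFun M t)
        ≤ Real.exp (assocFun M (κ * t / lam)) * Real.exp (assocFun M (κ * t / μ)) := by
          exact mul_le_mul (Real.exp_le_exp.mpr h1) (Real.exp_le_exp.mpr h2)
            (Real.exp_pos _).le (Real.exp_pos _).le
      _ ≤ C * Real.exp (assocFun M (κ * t)) := key
  have h4 := Real.log_le_log (mul_pos (Real.exp_pos _) (Real.exp_pos _)) h3
  rw [Real.log_mul (Real.exp_pos _).ne' (Real.exp_pos _).ne', Real.log_exp,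
    Real.log_mul hC.ne' (Real.exp_pos _).ne', Real.log_exp] at h4
  linarith

end tensor


/-- `M` satisfies (M.2) iff the weight system `V_M` satisfies condition [⊗] on `ℝ^d`
(`d ≥ 1`), equivalently iff `2 ω_M(t) ≤ ω_M(Ht) + log C` for some `H, C > 0`. -/
theorem M2_iff_tensor_condition (d : ℕ) (hd : 0 < d) (M : ℕ → ℝ) (hM : IsWeightSeq M) :
    ((∃ C H : ℝ, 0 < C ∧ 0 < H ∧ ∀ p q : ℕ, M (p + q) ≤ C * H ^ (p + q) * M p * M q) ↔
      (∀ ν : ℝ, 0 < ν → ∃ lam μ : ℝ, ν ≤ lam ∧ ν ≤ μ ∧ ∃ C > (0:ℝ),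
        ∀ x : EuclideanSpace ℝ (Fin d),
          Real.exp (assocFun M (‖x‖ / lam)) * Real.exp (assocFun M (‖x‖ / μ)) ≤
            C * Real.exp (assocFun M (‖x‖ / ν)))) ∧
    ((∃ C H : ℝ, 0 < C ∧ 0 < H ∧ ∀ p q : ℕ, M (p + q) ≤ C * H ^ (p + q) * M p * M q) ↔
      (∃ H C : ℝ, 0 < H ∧ 0 < C ∧ ∀ t ≥ (0:ℝ),
        2 * assocFun M t ≤ assocFun M (H * t) + Real.log C)) := by
  obtain ⟨hpos, hlc0, htend⟩ := hM
  have hlc : Monotone (mseq M) := mseq_mono hpos hlc0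
  have hunb : ∀ s : ℝ, ∃ N, s ≤ mseq M N := mseq_unbounded hpos htend
  constructor
  · exact ⟨fun hP => S_to_T d hd hpos hlc hunb (P_to_S hpos hlc hunb hP),
      fun hT => S_to_P hpos hlc hunb (T_to_S d hd hpos hlc hunb hT)⟩
  · exact ⟨P_to_S hpos hlc hunb, S_to_P hpos hlc hunb⟩
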